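/- Let Λ be an index set and let D^{(0)} := B_Λ. Then for every i ≥ 0, the (i+1)-th derived distribution D^{(i+1)} is again a pattern subspace (the span of a subset of the standard basis {Ω̃_{ij} : 1 ≤ i < j ≤ n} ∪ {E_{k,n+1} : 1 ≤ k ≤ n}), provided D^{(i)} is; in particular, every derived distribution of a pattern subspace is a pattern subspace. -/

import Mathlib

open Matrix

/-!
Common setup: real (n+1)×(n+1) matrices (rows/columns indexed by `Fin (n+1)`,
where index `i : Fin n` cast via `Fin.castSucc` plays the role of `i ∈ {1,…,n}`
and `Fin.last n` plays the role of the index `n+1`), the Lie bracket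
`⁅A,B⁆ = A*B - B*A`, the matrices `Ω̃_{ij}` and `E_{k,n+1}`, the Lie algebra
`se(n)`, index sets `Λ`, pattern subspaces `B_Λ`, graphs with solid/broken
edges, the one-step transitive closure, and derived distributions.
-/

/-- The ambient space of real (n+1)×(n+1) matrices. -/
abbrev Mat (n : ℕ) := Matrix (Fin (n + 1)) (Fin (n + 1)) ℝ

/-- `Ω̃_{ij}`: 1 in entry (i,j), −1 in entry (j,i), 0 elsewhere (indices among 1,…,n). -/
def Omega {n : ℕ} (i j : Fin n) : Mat n :=
  Matrix.single i.castSucc j.castSucc 1 - Matrix.single j.castSucc i.castSucc 1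

/-- `E_{k,n+1}`: 1 in entry (k, n+1), 0 elsewhere. -/
def Ecol {n : ℕ} (k : Fin n) : Mat n :=
  Matrix.single k.castSucc (Fin.last n) 1

/-- The set se(n): matrices whose (n+1)-th row is zero and with
`M(i,j) = −M(j,i)` for all 1 ≤ i,j ≤ n. -/
def seSet (n : ℕ) : Set (Mat n) :=
  {M | (∀ j, M (Fin.last n) j = 0) ∧
    ∀ i j : Fin n, M i.castSucc j.castSucc = - M j.castSucc i.castSucc}

/-- se(n) as a real subspace of the (n+1)×(n+1) matrices. -/
def seL (n : ℕ) : Submodule ℝ (Mat n) where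
  carrier := seSet n
  add_mem' := by
    rintro a b ⟨ha1, ha2⟩ ⟨hb1, hb2⟩
    refine ⟨fun j => ?_, fun i j => ?_⟩
    · simp [Matrix.add_apply, ha1 j, hb1 j]
    · simp only [Matrix.add_apply, ha2 i j, hb2 i j]; ring
  zero_mem' := by
    refine ⟨fun j => ?_, fun i j => ?_⟩ <;> simp
  smul_mem' := by
    rintro c a ⟨ha1, ha2⟩
    refine ⟨fun j => ?_, fun i j => ?_⟩
    · simp [Matrix.smul_apply, ha1 j]
    · simp only [Matrix.smul_apply, ha2 i j, smul_neg]

/-- Kronecker delta (real-valued). -/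
def kron {n : ℕ} (p q : Fin n) : ℝ := if p = q then 1 else 0

/-- An index set Λ: a set of pairs (p,q) with p < q, i.e. a subset of
`{(i,j) : 1 ≤ i < j ≤ n} ∪ {(k, n+1) : 1 ≤ k ≤ n}`. -/
def IndexSet {n : ℕ} (Λ : Set (Fin (n + 1) × Fin (n + 1))) : Prop :=
  ∀ e ∈ Λ, e.1 < e.2

/-- The generating set `{Ω̃_{ij} : (i,j) ∈ Λ, j ≤ n} ∪ {E_{k,n+1} : (k,n+1) ∈ Λ}`. -/
def genSet {n : ℕ} (Λ : Set (Fin (n + 1) × Fin (n + 1))) : Set (Mat n) :=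
  {M | (∃ i j : Fin n, (i.castSucc, j.castSucc) ∈ Λ ∧ M = Omega i j) ∨
    (∃ k : Fin n, (k.castSucc, Fin.last n) ∈ Λ ∧ M = Ecol k)}

/-- The pattern subspace `B_Λ`. -/
def BLam {n : ℕ} (Λ : Set (Fin (n + 1) × Fin (n + 1))) : Submodule ℝ (Mat n) :=
  Submodule.span ℝ (genSet Λ)

attribute [local instance] LieRing.ofAssociativeRing

/-- `B_Λ` generates `se(n)` as a Lie algebra: the smallest real subspace containing
`B_Λ` and closed under the bracket (i.e. the Lie subalgebra generated by `B_Λ`)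
equals `se(n)`. -/
def GeneratesSE (n : ℕ) (Λ : Set (Fin (n + 1) × Fin (n + 1))) : Prop :=
  (LieSubalgebra.lieSpan ℝ (Mat n) (BLam Λ : Set (Mat n)) : Set (Mat n)) = seSet n

/-- A graph on vertices {1,…,n+1} recorded by its solid and broken adjacency relations. -/
structure SBGraph (n : ℕ) where
  solid : Fin (n + 1) → Fin (n + 1) → Prop
  broken : Fin (n + 1) → Fin (n + 1) → Prop

/-- A well-formed solid/broken graph: simple and symmetric; solid edges have both
endpoints among 1,…,n, broken edges have one endpoint equal to n+1. -/
def SBGraph.Good {n : ℕ} (G : SBGraph n) : Prop :=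
  (∀ p q, G.solid p q → G.solid q p) ∧ (∀ p q, G.solid p q → p ≠ q) ∧
  (∀ p q, G.solid p q → p ≠ Fin.last n ∧ q ≠ Fin.last n) ∧
  (∀ p q, G.broken p q → G.broken q p) ∧ (∀ p q, G.broken p q → p ≠ q) ∧
  (∀ p q, G.broken p q → p = Fin.last n ∨ q = Fin.last n)

/-- The one-step closure: for distinct vertices i,j,k, add a solid edge {i,k} whenever
{i,j} and {j,k} are both solid, and a broken edge {i,k} whenever one of {i,j},{j,k} is
solid and the other is broken (nothing is added when both are broken). -/
def SBGraph.step {n : ℕ} (G : SBGraph n) : SBGraph n where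
  solid := fun i k => G.solid i k ∨
    (∃ j, i ≠ j ∧ j ≠ k ∧ i ≠ k ∧ G.solid i j ∧ G.solid j k)
  broken := fun i k => G.broken i k ∨
    (∃ j, i ≠ j ∧ j ≠ k ∧ i ≠ k ∧
      ((G.solid i j ∧ G.broken j k) ∨ (G.broken i j ∧ G.solid j k)))

/-- The l-th transitive closure `G^{(l)}`. -/
def SBGraph.closure {n : ℕ} (G : SBGraph n) (l : ℕ) : SBGraph n :=
  (fun H => SBGraph.step H)^[l] G

/-- `G` is the complete graph on the n+1 vertices: every pair of distinct vertices
is joined by a (solid or broken) edge. -/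
def SBGraph.IsComplete {n : ℕ} (G : SBGraph n) : Prop :=
  ∀ p q : Fin (n + 1), p ≠ q → G.solid p q ∨ G.broken p q

/-- The graph `G(B_Λ)` associated with a pattern: solid edges {i,j} for (i,j) ∈ Λ with
j ≤ n, broken edges {k,n+1} for (k,n+1) ∈ Λ. -/
def patternGraph {n : ℕ} (Λ : Set (Fin (n + 1) × Fin (n + 1))) : SBGraph n where
  solid := fun p q => ∃ i j : Fin n, (i.castSucc, j.castSucc) ∈ Λ ∧
    ((p = i.castSucc ∧ q = j.castSucc) ∨ (p = j.castSucc ∧ q = i.castSucc))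
  broken := fun p q => ∃ k : Fin n, (k.castSucc, Fin.last n) ∈ Λ ∧
    ((p = k.castSucc ∧ q = Fin.last n) ∨ (p = Fin.last n ∧ q = k.castSucc))

/-- One step of the derived-distribution construction:
`D ↦ D + span{[A₁,A₂] : A₁,A₂ ∈ D}`. -/
def derivedStep {n : ℕ} (D : Submodule ℝ (Mat n)) : Submodule ℝ (Mat n) :=
  D ⊔ Submodule.span ℝ {M | ∃ A B, A ∈ D ∧ B ∈ D ∧ M = A * B - B * A}

/-- The i-th derived distribution `D^{(i)}`. -/
def derivedIter {n : ℕ} (D : Submodule ℝ (Mat n)) (i : ℕ) : Submodule ℝ (Mat n) :=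
  (fun S => derivedStep S)^[i] D

/-- `D` is a pattern subspace: the span of a subset of the standard basis
`{Ω̃_{ij} : 1 ≤ i < j ≤ n} ∪ {E_{k,n+1} : 1 ≤ k ≤ n}`, i.e. `D = B_Λ` for some index set Λ. -/
def IsPattern {n : ℕ} (D : Submodule ℝ (Mat n)) : Prop :=
  ∃ Λ : Set (Fin (n + 1) × Fin (n + 1)), IndexSet Λ ∧ D = BLam Λ

/-
The commutator of two elements of the signed basis `{Ω̃_ij} ∪ {±E_{k,n+1}}` (which contains
`Ω̃_ii = 0` and `Ω̃_ji = -Ω̃_ij`) is again such an element, because in `[Ω̃_ij, Ω̃_kl]` and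
`[Ω̃_ij, E_{k,n+1}]` at most one term survives. Since the commutators of a spanning set span the
commutators of its span, `D + [D, D]` for `D = span S`, `S` part of the standard basis, is spanned
by the signed basis vectors in `S ∪ [S, S]`; and any span of signed basis vectors is a pattern
subspace.
-/

theorem Submodule.span_commutators_span {R A : Type*} [CommRing R] [Ring A] [Algebra R A]
    (s : Set A) :
    span R {M | ∃ a b, a ∈ span R s ∧ b ∈ span R s ∧ M = a * b - b * a} =
      span R (Set.image2 (fun a b => a * b - b * a) s s) := by
  let f : A →ₗ[R] A →ₗ[R] A := LinearMap.mul R A - (LinearMap.mul R A).flip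
  have hf : ∀ a b, f a b = a * b - b * a := fun _ _ => rfl
  have := map₂_span_span R f s s
  rw [map₂_eq_span_image2] at this
  simp only [hf] at this
  convert this using 2
  ext M
  simp [eq_comm]

theorem Matrix.single_mul_single_eq_ite {l m o α : Type*} [Fintype m] [DecidableEq l]
    [DecidableEq m] [DecidableEq o] [NonUnitalNonAssocSemiring α] (i : l) (j k : m) (p : o)
    (a b : α) : single i j a * single k p b = if j = k then single i p (a * b) else 0 := by
  split_ifs with h
  · subst h; simp
  · simp [h]

section

variable {n : ℕ}

@[simp] lemma omega_self (i : Fin n) : Omega i i = 0 := sub_self _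

@[simp] lemma neg_omega (i j : Fin n) : -Omega i j = Omega j i := by
  simp [Omega]

@[simp] lemma omega_add_omega_swap (i j : Fin n) : Omega i j + Omega j i = 0 := by
  rw [← neg_omega j i, neg_add_cancel]

lemma omega_commutator_omega (i j k l : Fin n) :
    Omega i j * Omega k l - Omega k l * Omega i j =
      kron j k • Omega i l - kron i k • Omega j l - kron j l • Omega i k
        + kron i l • Omega j k := by
  simp only [Omega, sub_mul, mul_sub, single_mul_single_eq_ite, mul_one, Fin.castSucc_inj, kron]
  by_cases hjk : j = k <;> by_cases hik : i = k <;> by_cases hjl : j = l <;>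
    by_cases hil : i = l <;> subst_vars <;> simp_all [eq_comm] <;> abel

lemma omega_commutator_ecol (i j k : Fin n) :
    Omega i j * Ecol k - Ecol k * Omega i j = kron j k • Ecol i - kron i k • Ecol j := by
  simp only [Omega, Ecol, sub_mul, mul_sub, single_mul_single_eq_ite, mul_one, Fin.castSucc_inj,
    kron, (Fin.castSucc_lt_last _).ne', if_false]
  by_cases hjk : j = k <;> by_cases hik : i = k <;> subst_vars <;> simp_all

@[simp] lemma ecol_mul_ecol (k l : Fin n) : Ecol k * Ecol l = 0 := by
  simp [Ecol, (Fin.castSucc_lt_last _).ne']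

def signedBasis (n : ℕ) : Set (Mat n) :=
  {M | (∃ i j, M = Omega i j) ∨ ∃ k, M = Ecol k ∨ M = -Ecol k}

@[simp] lemma omega_mem_signedBasis (i j : Fin n) : Omega i j ∈ signedBasis n :=
  Or.inl ⟨i, j, rfl⟩

@[simp] lemma ecol_mem_signedBasis (k : Fin n) : Ecol k ∈ signedBasis n :=
  Or.inr ⟨k, Or.inl rfl⟩

@[simp] lemma neg_ecol_mem_signedBasis (k : Fin n) : -Ecol k ∈ signedBasis n :=
  Or.inr ⟨k, Or.inr rfl⟩

@[simp] lemma zero_mem_signedBasis [NeZero n] : (0 : Mat n) ∈ signedBasis n := by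
  simpa using omega_mem_signedBasis (0 : Fin n) 0

lemma neg_mem_signedBasis {a : Mat n} (ha : a ∈ signedBasis n) : -a ∈ signedBasis n := by
  rcases ha with ⟨i, j, rfl⟩ | ⟨k, rfl | rfl⟩ <;> simp

lemma omega_commutator_omega_mem (i j k l : Fin n) :
    Omega i j * Omega k l - Omega k l * Omega i j ∈ signedBasis n := by
  have : NeZero n := NeZero.of_pos i.pos
  rw [omega_commutator_omega]
  by_cases hjk : j = k <;> by_cases hik : i = k <;> by_cases hjl : j = l <;>
    by_cases hil : i = l <;> subst_vars <;> simp_all [kron]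

lemma omega_commutator_ecol_mem (i j k : Fin n) :
    Omega i j * Ecol k - Ecol k * Omega i j ∈ signedBasis n := by
  have : NeZero n := NeZero.of_pos i.pos
  rw [omega_commutator_ecol]
  by_cases hjk : j = k <;> by_cases hik : i = k <;> subst_vars <;> simp_all [kron]

lemma commutator_mem_signedBasis {a b : Mat n} (ha : a ∈ signedBasis n)
    (hb : b ∈ signedBasis n) : a * b - b * a ∈ signedBasis n := by
  rcases ha with ⟨i, j, rfl⟩ | ⟨k, rfl | rfl⟩
  · rcases hb with ⟨k, l, rfl⟩ | ⟨k, rfl | rfl⟩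
    · exact omega_commutator_omega_mem i j k l
    · exact omega_commutator_ecol_mem i j k
    · convert neg_mem_signedBasis (omega_commutator_ecol_mem i j k) using 1; noncomm_ring
  · have : NeZero n := NeZero.of_pos k.pos
    rcases hb with ⟨i, j, rfl⟩ | ⟨l, rfl | rfl⟩
    · convert neg_mem_signedBasis (omega_commutator_ecol_mem i j k) using 1; noncomm_ring
    all_goals simp
  · have : NeZero n := NeZero.of_pos k.pos
    rcases hb with ⟨i, j, rfl⟩ | ⟨l, rfl | rfl⟩
    · convert omega_commutator_ecol_mem i j k using 1; noncomm_ring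
    all_goals simp

lemma genSet_subset_signedBasis (Λ : Set (Fin (n + 1) × Fin (n + 1))) :
    genSet Λ ⊆ signedBasis n := by
  rintro _ (⟨i, j, -, rfl⟩ | ⟨k, -, rfl⟩) <;> simp

lemma genSet_singleton_omega (i j : Fin n) :
    genSet {(i.castSucc, j.castSucc)} = {Omega i j} := by
  ext M
  simp [genSet, eq_comm]

lemma genSet_singleton_ecol (k : Fin n) : genSet {(k.castSucc, Fin.last n)} = {Ecol k} := by
  ext M
  simp [genSet, (Fin.castSucc_lt_last _).ne', eq_comm]

lemma isPattern_span {T : Set (Mat n)} (hT : T ⊆ signedBasis n) :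
    IsPattern (Submodule.span ℝ T) := by
  set Λ := {e : Fin (n + 1) × Fin (n + 1) | e.1 < e.2 ∧ genSet {e} ⊆ Submodule.span ℝ T}
  have omega_mem {i j : Fin n} (hij : i < j) (h : Omega i j ∈ Submodule.span ℝ T) :
      Omega i j ∈ BLam Λ :=
    Submodule.subset_span <| Or.inl ⟨i, j,
      ⟨Fin.castSucc_lt_castSucc_iff.mpr hij, by simpa [genSet_singleton_omega] using h⟩, rfl⟩
  have ecol_mem {k : Fin n} (h : Ecol k ∈ Submodule.span ℝ T) : Ecol k ∈ BLam Λ :=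
    Submodule.subset_span <| Or.inr ⟨k,
      ⟨Fin.castSucc_lt_last k, by simpa [genSet_singleton_ecol] using h⟩, rfl⟩
  refine ⟨Λ, fun e he => he.1, le_antisymm (Submodule.span_le.mpr ?_) (Submodule.span_le.mpr ?_)⟩
  · intro M hM
    have hM' : M ∈ Submodule.span ℝ T := Submodule.subset_span hM
    rcases hT hM with ⟨i, j, rfl⟩ | ⟨k, rfl | rfl⟩
    · rcases lt_trichotomy i j with hij | rfl | hji
      · exact omega_mem hij hM'
      · simp
      · rw [← neg_omega]
        exact neg_mem (omega_mem hji (by simpa using neg_mem hM'))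
    · exact ecol_mem hM'
    · exact neg_mem (ecol_mem (by simpa using neg_mem hM'))
  · rintro _ (⟨i, j, ⟨-, h⟩, rfl⟩ | ⟨k, ⟨-, h⟩, rfl⟩)
    · simpa [genSet_singleton_omega] using h
    · simpa [genSet_singleton_ecol] using h

lemma derivedStep_span (s : Set (Mat n)) :
    derivedStep (Submodule.span ℝ s) =
      Submodule.span ℝ (s ∪ Set.image2 (fun a b => a * b - b * a) s s) := by
  rw [derivedStep, Submodule.span_commutators_span, Submodule.span_union]

lemma IsPattern.derivedStep {D : Submodule ℝ (Mat n)} (hD : IsPattern D) :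
    IsPattern (derivedStep D) := by
  obtain ⟨Λ, -, rfl⟩ := hD
  have hΛ := genSet_subset_signedBasis Λ
  rw [BLam, derivedStep_span]
  refine isPattern_span (Set.union_subset hΛ ?_)
  rintro _ ⟨a, ha, b, hb, rfl⟩
  exact commutator_mem_signedBasis (hΛ ha) (hΛ hb)

end

theorem stmt16_general (n : ℕ) :
    (∀ D : Submodule ℝ (Mat n), IsPattern D → IsPattern (derivedStep D)) ∧
    (∀ Λ : Set (Fin (n + 1) × Fin (n + 1)), IndexSet Λ →
      ∀ i : ℕ, IsPattern (derivedIter (BLam Λ) i)) := by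
  refine ⟨fun D hD => hD.derivedStep, fun Λ hΛ i => ?_⟩
  induction i with
  | zero => exact ⟨Λ, hΛ, rfl⟩
  | succ i ih =>
    rw [derivedIter, Function.iterate_succ_apply']
    exact ih.derivedStep

/-- If D⁽ⁱ⁾ is a pattern subspace then so is D⁽ⁱ⁺¹⁾; in particular,
every derived distribution of a pattern subspace is a pattern subspace. -/
theorem stmt16 (n : ℕ) (hn : 1 ≤ n) :
    (∀ D : Submodule ℝ (Mat n), IsPattern D → IsPattern (derivedStep D)) ∧
    (∀ Λ : Set (Fin (n + 1) × Fin (n + 1)), IndexSet Λ →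
      ∀ i : ℕ, IsPattern (derivedIter (BLam Λ) i)) :=
  stmt16_general n
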